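/- arXiv:2005.06230 — 3 statements merged into one kernel-verified Lean document; each statement's English description precedes it below -/
import Mathlib

section
/- Let P be an n-gon (n ≥ 3) with a dissection D, let α ≠ β be vertices of P, let K be a semifield and f : diag(P) → K any map. Then Σ_{π ∈ T(α→β)} f(π) = Σ_{ρ ∈ T(β→α)} f(ρ), where the sums range over the T-paths from α to β, respectively from β to α, with respect to D. -/
/-!
Common definitions: polygons with vertex set `ZMod n`, crossing of diagonals,
dissections, (weak) friezes with values in a semifield, and T-paths.
-/

/-- A *semifield* in the sense of the paper: a set `K` with a commutative, associative
addition and a multiplication making `K` a commutative group, such that multiplication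
distributes over addition.  (There is no zero and no subtraction.) -/
class PaperSemifield (K : Type*) extends CommGroup K, AddCommSemigroup K where
  mul_add' : ∀ a b c : K, a * (b + c) = a * b + a * c

/-- Position of the vertex `x` of the `n`-gon relative to the vertex `a`, going around
the polygon in the positive direction; `relPos n a x = 0` iff `x = a`. -/
def relPos (n : ℕ) (a x : ZMod n) : ℕ := (x - a).val

/-- The vertices `a, b, c, d` of the `n`-gon appear strictly in this cyclic order. -/
def CyclicallyOrdered (n : ℕ) (a b c d : ZMod n) : Prop :=
  0 < relPos n a b ∧ relPos n a b < relPos n a c ∧ relPos n a c < relPos n a d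

/-- The diagonals `{a,b}` and `{c,d}` of the `n`-gon *cross*: the four vertices are
distinct and appear in the cyclic order `a, c, b, d` or `a, d, b, c`. -/
def Crosses (n : ℕ) (a b c d : ZMod n) : Prop :=
  CyclicallyOrdered n a c b d ∨ CyclicallyOrdered n a d b c

/-- `{a, b}` is an edge of the `n`-gon, i.e. joins neighbouring vertices. -/
def IsEdge (n : ℕ) (a b : ZMod n) : Prop := b = a + 1 ∨ a = b + 1

/-- `{a, b}` is an internal diagonal of the `n`-gon. -/
def IsInternalDiag (n : ℕ) (a b : ZMod n) : Prop := a ≠ b ∧ ¬ IsEdge n a b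

/-- `w'` is the successor of `w` in the induced cyclic order of the subpolygon of the
`n`-gon with vertex set `W`. -/
def NextIn (n : ℕ) (W : Set (ZMod n)) (w w' : ZMod n) : Prop :=
  w ∈ W ∧ w' ∈ W ∧ w' ≠ w ∧ ∀ u ∈ W, relPos n w u = 0 ∨ relPos n w w' ≤ relPos n w u

/-- `D` is a dissection of the subpolygon of the `n`-gon with vertex set `W`: a set of
pairwise non-crossing diagonals of the subpolygon joining non-neighbouring vertices. -/
def IsDissectionOf (n : ℕ) (W : Set (ZMod n)) (D : Set (Sym2 (ZMod n))) : Prop :=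
  (∀ a b, s(a, b) ∈ D → a ∈ W ∧ b ∈ W ∧ a ≠ b ∧ ¬ NextIn n W a b ∧ ¬ NextIn n W b a) ∧
  (∀ a b c d, s(a, b) ∈ D → s(c, d) ∈ D → ¬ Crosses n a b c d)

/-- `D` is a dissection of the `n`-gon. -/
def IsDissection (n : ℕ) (D : Set (Sym2 (ZMod n))) : Prop :=
  IsDissectionOf n Set.univ D

/-- `f` is symmetric on pairs of vertices from `W`, i.e. represents a map defined on
unordered diagonals of the subpolygon with vertex set `W`. -/
def SymmOn (n : ℕ) {K : Type*} (W : Set (ZMod n)) (f : ZMod n → ZMod n → K) : Prop :=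
  ∀ a b, a ∈ W → b ∈ W → f a b = f b a

/-- The Ptolemy relation for `f` at the crossing diagonals `{a,b}` and `{c,d}`. -/
def PtolemyRel {n : ℕ} {K : Type*} [Mul K] [Add K]
    (f : ZMod n → ZMod n → K) (a b c d : ZMod n) : Prop :=
  f a b * f c d = f a c * f b d + f a d * f b c

/-- `f` is a weak frieze on the subpolygon with vertex set `W` with respect to `D`:
the Ptolemy relation holds whenever `{a,b}` and `{c,d}` are crossing diagonals of the
subpolygon with `{c,d} ∈ D`. -/
def IsWeakFriezeOn (n : ℕ) {K : Type*} [Mul K] [Add K] (W : Set (ZMod n))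
    (D : Set (Sym2 (ZMod n))) (f : ZMod n → ZMod n → K) : Prop :=
  ∀ a b c d : ZMod n, a ∈ W → b ∈ W → c ∈ W → d ∈ W →
    Crosses n a b c d → s(c, d) ∈ D → PtolemyRel f a b c d

/-- `f` is a weak frieze on the `n`-gon with respect to the dissection `D`. -/
def IsWeakFrieze (n : ℕ) {K : Type*} [Mul K] [Add K]
    (D : Set (Sym2 (ZMod n))) (f : ZMod n → ZMod n → K) : Prop :=
  IsWeakFriezeOn n Set.univ D f

/-- `f` is a frieze on the subpolygon with vertex set `W`: the Ptolemy relation holds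
for all crossing diagonals of the subpolygon. -/
def IsFriezeOn (n : ℕ) {K : Type*} [Mul K] [Add K] (W : Set (ZMod n))
    (f : ZMod n → ZMod n → K) : Prop :=
  ∀ a b c d : ZMod n, a ∈ W → b ∈ W → c ∈ W → d ∈ W →
    Crosses n a b c d → PtolemyRel f a b c d

/-- `f` is a frieze on the `n`-gon. -/
def IsFrieze (n : ℕ) {K : Type*} [Mul K] [Add K] (f : ZMod n → ZMod n → K) : Prop :=
  IsFriezeOn n Set.univ f

/-- The vertices of the `n`-gon realised as a regular convex `n`-gon in the Euclidean
plane. -/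
noncomputable def vtx (n : ℕ) (a : ZMod n) : ℝ × ℝ :=
  (Real.cos (2 * Real.pi * (a.val : ℝ) / n), Real.sin (2 * Real.pi * (a.val : ℝ) / n))

/-- The point with parameter `t` on the segment from `A` to `B`. -/
def segPt (A B : ℝ × ℝ) (t : ℝ) : ℝ × ℝ :=
  ((1 - t) * A.1 + t * B.1, (1 - t) * A.2 + t * B.2)

/-- In the regular realisation of the `n`-gon, the diagonal `{c,d}` crosses the diagonal
`{a,b}` at the interior point with parameter `t` along the segment from `a` to `b`. -/
def CrossesAt (n : ℕ) (a b c d : ZMod n) (t : ℝ) : Prop :=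
  0 < t ∧ t < 1 ∧ ∃ s : ℝ, 0 < s ∧ s < 1 ∧
    segPt (vtx n a) (vtx n b) t = segPt (vtx n c) (vtx n d) s

/-- `l` is a T-path from `a` to `b` with respect to `D` in the subpolygon of the `n`-gon
with vertex set `W`.  Writing `p = l.length` and `π_i = l.getD (i-1) 0` (so the paper's
`π_1, …, π_p` are the entries of `l`), the conditions are: the path starts at `a` and
ends at `b`, uses vertices of `W`; (i) the consecutive pairs are pairwise different
diagonals; (ii) no step crosses a diagonal in `D`; (iii) the steps starting at an
even position (in the paper's 1-based numbering) are diagonals in `D` which cross the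
diagonal `{a,b}` at pairwise different points progressing monotonically in the
direction from `a` to `b`. -/
def IsTPathOn (n : ℕ) (W : Set (ZMod n)) (D : Set (Sym2 (ZMod n))) (a b : ZMod n)
    (l : List (ZMod n)) : Prop :=
  2 ≤ l.length ∧
  l.getD 0 0 = a ∧
  l.getD (l.length - 1) 0 = b ∧
  (∀ i, i < l.length → l.getD i 0 ∈ W) ∧
  (∀ i, i + 1 < l.length → l.getD i 0 ≠ l.getD (i + 1) 0) ∧
  (∀ i j, i < j → j + 1 < l.length →
    s(l.getD i 0, l.getD (i + 1) 0) ≠ s(l.getD j 0, l.getD (j + 1) 0)) ∧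
  (∀ i, i + 1 < l.length → ∀ c d, s(c, d) ∈ D →
    ¬ Crosses n (l.getD i 0) (l.getD (i + 1) 0) c d) ∧
  (∀ i, Odd i → i + 1 < l.length → s(l.getD i 0, l.getD (i + 1) 0) ∈ D) ∧
  (∃ t : ℕ → ℝ,
    (∀ i, Odd i → i + 1 < l.length → CrossesAt n a b (l.getD i 0) (l.getD (i + 1) 0) (t i)) ∧
    (∀ i j, Odd i → Odd j → i < j → j + 1 < l.length → t i < t j))

/-- `l` is a T-path from `a` to `b` with respect to `D` in the `n`-gon. -/
def IsTPath (n : ℕ) (D : Set (Sym2 (ZMod n))) (a b : ZMod n) (l : List (ZMod n)) : Prop :=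
  IsTPathOn n Set.univ D a b l

open Classical in
/-- The (finite) set of all T-paths from `a` to `b` with respect to `D` in the
subpolygon with vertex set `W`.  (Any T-path has pairwise different steps, hence has
length at most `n * n + 1`, so this finite set contains all of them.) -/
noncomputable def TPathFinsetOn (n : ℕ) [NeZero n] (W : Set (ZMod n))
    (D : Set (Sym2 (ZMod n))) (a b : ZMod n) : Finset (List (ZMod n)) :=
  ((Finset.range (n * n + 2)).biUnion fun k =>
    (Finset.univ : Finset (Fin k → ZMod n)).image List.ofFn).filter (IsTPathOn n W D a b)

/-- The (finite) set of all T-paths from `a` to `b` with respect to `D` in the `n`-gon. -/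
noncomputable def TPathFinset (n : ℕ) [NeZero n] (D : Set (Sym2 (ZMod n))) (a b : ZMod n) :
    Finset (List (ZMod n)) :=
  TPathFinsetOn n Set.univ D a b

/-- The weight `f(π)` of a T-path `l`: the product of the values of `f` on the steps at
odd positions (1-based) divided by the product of the values on the steps at even
positions. -/
def pathWeight (n : ℕ) {K : Type*} [CommGroup K] (f : ZMod n → ZMod n → K)
    (l : List (ZMod n)) : K :=
  (∏ i ∈ (Finset.range (l.length - 1)).filter (fun i => Even i),
      f (l.getD i 0) (l.getD (i + 1) 0)) /
  (∏ i ∈ (Finset.range (l.length - 1)).filter (fun i => Odd i),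
      f (l.getD i 0) (l.getD (i + 1) 0))

/-- `f` satisfies the T-path formula with respect to `D` on the subpolygon with vertex
set `W`: for all vertices `a ≠ b` of the subpolygon, `f a b` is the sum of the weights
of all T-paths from `a` to `b`.  Since the semifield `K` has no zero element, the sum is
computed in `WithZero K` (the sum is in fact always a sum of a nonempty collection). -/
def SatisfiesTPathFormulaOn (n : ℕ) [NeZero n] {K : Type*} [PaperSemifield K]
    (W : Set (ZMod n)) (D : Set (Sym2 (ZMod n))) (f : ZMod n → ZMod n → K) : Prop :=
  ∀ a b : ZMod n, a ∈ W → b ∈ W → a ≠ b →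
    WithZero.coe (f a b) = ∑ l ∈ TPathFinsetOn n W D a b, WithZero.coe (pathWeight n f l)

/-- `f` satisfies the T-path formula with respect to `D` on the `n`-gon. -/
def SatisfiesTPathFormula (n : ℕ) [NeZero n] {K : Type*} [PaperSemifield K]
    (D : Set (Sym2 (ZMod n))) (f : ZMod n → ZMod n → K) : Prop :=
  SatisfiesTPathFormulaOn n Set.univ D f

/-- `W` is the vertex set of one of the subpolygons into which the pairwise non-crossing
internal diagonals `E` divide the `n`-gon: `W` has at least three vertices, consecutive
vertices of `W` are joined by an edge of the polygon or by a diagonal in `E`, and no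
diagonal in `E` cuts through `W`. -/
def IsCell (n : ℕ) (E : Set (Sym2 (ZMod n))) (W : Set (ZMod n)) : Prop :=
  3 ≤ W.ncard ∧
  (∀ w w', NextIn n W w w' → (w' = w + 1 ∨ s(w, w') ∈ E)) ∧
  (∀ c d, s(c, d) ∈ E → c ∈ W → d ∈ W → (NextIn n W c d ∨ NextIn n W d c))

/-!
List reversal is a weight-preserving bijection from the T-paths `a → b` onto the T-paths
`b → a`: `f` is symmetric, and every T-path has an even number of vertices, so reversal
sends the steps at odd positions to steps at odd positions.

Evenness is where the geometry enters. If two different chords of the regular `n`-gon meet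
at a point interior to both, their endpoints alternate around the polygon, because the
orientation determinant with respect to one chord takes opposite signs at the endpoints of
the other. In a T-path with an odd number of vertices the last step is a diagonal of `D`
through `b` meeting `ab` inside, hence `ab` itself. With three vertices the path would be
`a, a, b`; otherwise its first step from `D` is a different chord meeting `ab` inside, so it
crosses `ab ∈ D`, which (ii) forbids.
-/

open Real Finset

def orient (A B P : ℝ × ℝ) : ℝ := (B.1 - A.1) * (P.2 - A.2) - (B.2 - A.2) * (P.1 - A.1)

theorem orient_segPt (A B C D : ℝ × ℝ) (s : ℝ) :
    orient A B (segPt C D s) = (1 - s) * orient A B C + s * orient A B D := by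
  simp only [orient, segPt]; ring

theorem orient_segPt_self (A B : ℝ × ℝ) (t : ℝ) : orient A B (segPt A B t) = 0 := by
  simp only [orient, segPt]; ring

theorem orient_self_left (A B : ℝ × ℝ) : orient A B A = 0 := by
  simp only [orient]; ring

theorem segPt_symm (A B : ℝ × ℝ) (t : ℝ) : segPt B A (1 - t) = segPt A B t := by
  simp only [segPt, Prod.mk.injEq]; constructor <;> ring

theorem orient_cos_sin (α β γ : ℝ) :
    orient (cos α, sin α) (cos β, sin β) (cos γ, sin γ) =
      sin (β - α) + sin (γ - β) - sin (γ - α) := by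
  simp only [orient, sin_sub]; ring

theorem sin_two_mul_add_sin_sub_sin_two_mul (u w : ℝ) :
    sin (2 * u) + sin (2 * w - 2 * u) - sin (2 * w) = -4 * sin u * sin w * sin (u - w) := by
  rw [← mul_sub, sin_two_mul, sin_two_mul, sin_two_mul, sin_sub, cos_sub, sin_sub]
  linear_combination 2 * sin w * cos w * sin_sq_add_cos_sq u
    - 2 * sin u * cos u * sin_sq_add_cos_sq w

theorem sin_pi_mul_div_pos {x m : ℝ} (h0 : 0 < x) (h1 : x < m) : 0 < sin (π * x / m) := by
  have hm : 0 < m := h0.trans h1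
  apply sin_pos_of_pos_of_lt_pi (by positivity)
  rw [div_lt_iff₀ hm]
  nlinarith [pi_pos]

section RelPos

variable {n : ℕ}

theorem relPos_lt [NeZero n] (a x : ZMod n) : relPos n a x < n := ZMod.val_lt _

theorem relPos_pos {a x : ZMod n} (h : x ≠ a) : 0 < relPos n a x :=
  ZMod.val_pos.mpr (sub_ne_zero.mpr h)

theorem relPos_inj [NeZero n] {a x y : ZMod n} : relPos n a x = relPos n a y ↔ x = y :=
  (ZMod.val_injective n).eq_iff.trans sub_left_inj

theorem relPos_of_le [NeZero n] {a c x : ZMod n} (h : relPos n a c ≤ relPos n a x) :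
    relPos n c x = relPos n a x - relPos n a c := by
  rw [relPos, relPos, relPos, ← ZMod.val_sub h, sub_sub_sub_cancel_right]

theorem relPos_swap [NeZero n] {a c : ZMod n} (h : c ≠ a) : relPos n c a = n - relPos n a c := by
  have : NeZero (c - a) := ⟨sub_ne_zero.mpr h⟩
  rw [relPos, relPos, ← ZMod.val_neg_of_ne_zero, neg_sub]

theorem exists_val_sub_val_eq_relPos [NeZero n] (a x : ZMod n) :
    ∃ k : ℤ, (x.val : ℤ) - a.val = relPos n a x + k * n := by
  have h : (((x.val : ℤ) - a.val - relPos n a x : ℤ) : ZMod n) = 0 := by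
    simp [relPos]
  obtain ⟨k, hk⟩ := (ZMod.intCast_zmod_eq_zero_iff_dvd _ _).mp h
  exact ⟨k, by linarith⟩

theorem CyclicallyOrdered.rotate [NeZero n] {a b c d : ZMod n} (h : CyclicallyOrdered n a b c d) :
    CyclicallyOrdered n b c d a := by
  obtain ⟨hb, hc, hd⟩ := h
  have hba : b ≠ a := fun h => by simp [h, relPos] at hb
  unfold CyclicallyOrdered
  rw [relPos_of_le hc.le, relPos_of_le (hc.trans hd).le, relPos_swap hba]
  have := relPos_lt a d
  omega

theorem crosses_swap [NeZero n] {a b c d : ZMod n} : Crosses n b a c d ↔ Crosses n a b c d := by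
  have key : ∀ {a b : ZMod n}, Crosses n b a c d → Crosses n a b c d := by
    rintro a b (h | h)
    · exact Or.inr h.rotate.rotate
    · exact Or.inl h.rotate.rotate
  exact ⟨key, key⟩

theorem not_crosses_of_right_eq (a c d : ZMod n) : ¬ Crosses n c d a d := by
  rintro (⟨-, -, h⟩ | ⟨-, h, -⟩) <;> exact lt_irrefl _ h

end RelPos

section Vertices

variable {n : ℕ} [NeZero n]

theorem orient_vtx (a b x : ZMod n) :
    orient (vtx n a) (vtx n b) (vtx n x) =
      -4 * sin (π * relPos n a b / n) * sin (π * relPos n a x / n) *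
        sin (π * ((relPos n a b : ℝ) - relPos n a x) / n) := by
  have hn : (n : ℝ) ≠ 0 := Nat.cast_ne_zero.mpr (NeZero.ne n)
  obtain ⟨kb, hkb⟩ := exists_val_sub_val_eq_relPos a b
  obtain ⟨kx, hkx⟩ := exists_val_sub_val_eq_relPos a x
  have hkb' : (b.val : ℝ) - a.val = relPos n a b + kb * n := by exact_mod_cast hkb
  have hkx' : (x.val : ℝ) - a.val = relPos n a x + kx * n := by exact_mod_cast hkx
  have hba : 2 * π * b.val / n - 2 * π * a.val / n =
      2 * (π * relPos n a b / n) + kb * (2 * π) := by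
    rw [div_sub_div_same, ← mul_sub, hkb']; field_simp
  have hxa : 2 * π * x.val / n - 2 * π * a.val / n =
      2 * (π * relPos n a x / n) + kx * (2 * π) := by
    rw [div_sub_div_same, ← mul_sub, hkx']; field_simp
  have hxb : 2 * π * x.val / n - 2 * π * b.val / n =
      2 * (π * relPos n a x / n) - 2 * (π * relPos n a b / n) +
        ((kx - kb : ℤ) : ℝ) * (2 * π) := by
    rw [div_sub_div_same, ← mul_sub, show (x.val : ℝ) - b.val = relPos n a x + kx * n -
      (relPos n a b + kb * n) by linarith]
    push_cast; field_simp; ring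
  rw [vtx, vtx, vtx, orient_cos_sin, hba, hxa, hxb, sin_add_int_mul_two_pi, sin_add_int_mul_two_pi,
    sin_add_int_mul_two_pi, sin_two_mul_add_sin_sub_sin_two_mul, ← sub_div, ← mul_sub]

theorem orient_vtx_neg {a b x : ZMod n} (hxa : x ≠ a) (hlt : relPos n a x < relPos n a b) :
    orient (vtx n a) (vtx n b) (vtx n x) < 0 := by
  have hx := relPos_pos hxa
  have hb := relPos_lt a b
  have h1 : 0 < sin (π * relPos n a b / n) :=
    sin_pi_mul_div_pos (by norm_cast; omega) (by norm_cast)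
  have h2 : 0 < sin (π * relPos n a x / n) :=
    sin_pi_mul_div_pos (by norm_cast) (by norm_cast; omega)
  have h3 : 0 < sin (π * ((relPos n a b : ℝ) - relPos n a x) / n) := by
    apply sin_pi_mul_div_pos
    · have : (relPos n a x : ℝ) < relPos n a b := by exact_mod_cast hlt
      linarith
    · have : (relPos n a b : ℝ) < n := by exact_mod_cast hb
      linarith [(Nat.cast_nonneg (relPos n a x) : (0 : ℝ) ≤ _)]
  rw [orient_vtx]
  nlinarith [mul_pos (mul_pos h1 h2) h3]

theorem orient_vtx_pos {a b x : ZMod n} (hba : b ≠ a) (hlt : relPos n a b < relPos n a x) :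
    0 < orient (vtx n a) (vtx n b) (vtx n x) := by
  have hb := relPos_pos hba
  have hx := relPos_lt a x
  have h1 : 0 < sin (π * relPos n a b / n) :=
    sin_pi_mul_div_pos (by norm_cast) (by norm_cast; omega)
  have h2 : 0 < sin (π * relPos n a x / n) :=
    sin_pi_mul_div_pos (by norm_cast; omega) (by norm_cast)
  have h3 : 0 < sin (π * ((relPos n a x : ℝ) - relPos n a b) / n) := by
    apply sin_pi_mul_div_pos
    · have : (relPos n a b : ℝ) < relPos n a x := by exact_mod_cast hlt
      linarith
    · have : (relPos n a x : ℝ) < n := by exact_mod_cast hx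
      linarith [(Nat.cast_nonneg (relPos n a b) : (0 : ℝ) ≤ _)]
  rw [orient_vtx, ← neg_sub, mul_neg, neg_div, sin_neg]
  nlinarith [mul_pos (mul_pos h1 h2) h3]

theorem orient_vtx_ne_zero {a b x : ZMod n} (hba : b ≠ a) (hxa : x ≠ a) (hxb : x ≠ b) :
    orient (vtx n a) (vtx n b) (vtx n x) ≠ 0 := by
  rcases lt_or_gt_of_ne ((relPos_inj (a := a)).not.mpr hxb) with h | h
  · exact (orient_vtx_neg hxa h).ne
  · exact (orient_vtx_pos hba h).ne'

end Vertices

section CrossesAt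

variable {n : ℕ} {a b c d : ZMod n} {t : ℝ}

theorem CrossesAt.swap_right (h : CrossesAt n a b c d t) : CrossesAt n a b d c t := by
  obtain ⟨ht0, ht1, s, hs0, hs1, heq⟩ := h
  exact ⟨ht0, ht1, 1 - s, by linarith, by linarith, by rw [heq, segPt_symm]⟩

theorem CrossesAt.swap_left (h : CrossesAt n a b c d t) : CrossesAt n b a c d (1 - t) := by
  obtain ⟨ht0, ht1, s, hs0, hs1, heq⟩ := h
  exact ⟨by linarith, by linarith, s, hs0, hs1, by rw [segPt_symm, heq]⟩

theorem CrossesAt.eq_of_left_eq [NeZero n] (hab : a ≠ b) (hda : d ≠ a)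
    (h : CrossesAt n a b a d t) : d = b := by
  obtain ⟨-, -, s, hs0, -, heq⟩ := h
  have hzero : s * orient (vtx n a) (vtx n b) (vtx n d) = 0 := by
    have := congrArg (orient (vtx n a) (vtx n b)) heq
    rwa [orient_segPt_self, orient_segPt, orient_self_left, mul_zero, zero_add, eq_comm] at this
  by_contra hdb
  exact orient_vtx_ne_zero hab.symm hda hdb ((mul_eq_zero.mp hzero).resolve_left hs0.ne')

theorem CrossesAt.crosses [NeZero n] (hab : a ≠ b) (hcd : c ≠ d) (hne : s(c, d) ≠ s(a, b))
    (h : CrossesAt n a b c d t) : Crosses n c d a b := by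
  have hca : c ≠ a := by
    rintro rfl; exact hne (by rw [h.eq_of_left_eq hab hcd.symm])
  have hcb : c ≠ b := by
    rintro rfl; exact hne (by rw [h.swap_left.eq_of_left_eq hab.symm hcd.symm, Sym2.eq_swap])
  have hda : d ≠ a := by
    rintro rfl; exact hne (by rw [h.swap_right.eq_of_left_eq hab hcd, Sym2.eq_swap])
  have hdb : d ≠ b := by
    rintro rfl; exact hne (by rw [h.swap_right.swap_left.eq_of_left_eq hab.symm hcd])
  obtain ⟨ht0, ht1, s, -, -, heq⟩ := h
  have hzero : (1 - t) * orient (vtx n c) (vtx n d) (vtx n a)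
      + t * orient (vtx n c) (vtx n d) (vtx n b) = 0 := by
    rw [← orient_segPt, heq, orient_segPt_self]
  rcases lt_or_gt_of_ne ((relPos_inj (a := c)).not.mpr hda.symm) with ha | ha <;>
    rcases lt_or_gt_of_ne ((relPos_inj (a := c)).not.mpr hdb.symm) with hb | hb
  · nlinarith [orient_vtx_neg hca.symm ha, orient_vtx_neg hcb.symm hb]
  · exact Or.inl ⟨relPos_pos hca.symm, ha, hb⟩
  · exact Or.inr ⟨relPos_pos hcb.symm, hb, ha⟩
  · nlinarith [orient_vtx_pos hcd.symm ha, orient_vtx_pos hcd.symm hb]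

end CrossesAt

theorem List.getD_reverse_step {α : Type*} (l : List α) (d : α) {i : ℕ}
    (h : i + 1 < l.length) :
    l.reverse.getD i d = l.getD (l.length - 2 - i + 1) d ∧
      l.reverse.getD (i + 1) d = l.getD (l.length - 2 - i) d := by
  rw [List.getD_reverse i (by omega), List.getD_reverse (i + 1) h]
  constructor <;> congr 1 <;> omega

theorem Finset.prod_filter_range_reflect {M : Type*} [CommMonoid M] (p : ℕ → Prop)
    [DecidablePred p] (g : ℕ → M) (m : ℕ) :
    ∏ i ∈ (range m).filter (fun i => p (m - 1 - i)), g (m - 1 - i) =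
      ∏ i ∈ (range m).filter p, g i := by
  simp only [prod_filter]
  exact prod_range_reflect (fun i => if p i then g i else 1) m

section TPath

variable {n : ℕ} {W : Set (ZMod n)} {D : Set (Sym2 (ZMod n))} {a b : ZMod n}
  {l : List (ZMod n)}

theorem IsTPathOn.even_length [NeZero n] (hab : a ≠ b) (hl : IsTPathOn n W D a b l) :
    Even l.length := by
  obtain ⟨hlen, hfirst, hlast, -, hadj, hdiff, hnc, hDmem, t, hcr, -⟩ := hl
  have odd_step : ∀ i, Odd i → i + 1 < l.length →
      s(l.getD i 0, l.getD (i + 1) 0) = s(a, b) ∨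
        Crosses n (l.getD i 0) (l.getD (i + 1) 0) a b := fun i hi hil =>
    or_iff_not_imp_left.mpr fun hne => (hcr i hi hil).crosses hab (hadj i hil) hne
  by_contra hodd
  have hp := Nat.odd_iff.mp (Nat.not_even_iff_odd.mp hodd)
  set j := l.length - 2
  have hj : Odd j := Nat.odd_iff.mpr (by omega)
  have hjl : j + 1 < l.length := by omega
  have hjb : l.getD (j + 1) 0 = b := by rwa [show j + 1 = l.length - 1 by omega]
  have hstep_j : s(l.getD j 0, l.getD (j + 1) 0) = s(a, b) := by
    rcases odd_step j hj hjl with h | h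
    · exact h
    · rw [hjb] at h; exact absurd h (not_crosses_of_right_eq a _ b)
  have habD : s(a, b) ∈ D := hstep_j ▸ hDmem j hj hjl
  rcases (by omega : l.length = 3 ∨ 5 ≤ l.length) with h3 | h5
  · have hj1 : j = 1 := by omega
    rw [hjb, Sym2.congr_left, hj1] at hstep_j
    exact hadj 0 (by omega) (hfirst.trans hstep_j.symm)
  · have hne : s(l.getD 1 0, l.getD (1 + 1) 0) ≠ s(a, b) :=
      hstep_j ▸ hdiff 1 j (by omega) hjl
    exact hnc 1 (by omega) a b habD ((odd_step 1 odd_one (by omega)).resolve_left hne)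

theorem IsTPathOn.reverse [NeZero n] (hab : a ≠ b) (hl : IsTPathOn n W D a b l) :
    IsTPathOn n W D b a l.reverse := by
  have hev := Nat.even_iff.mp (hl.even_length hab)
  obtain ⟨hlen, hfirst, hlast, hmem, hadj, hdiff, hnc, hDmem, t, hcr, hmono⟩ := hl
  have hpar : ∀ i, i + 1 < l.length → (Odd i ↔ Odd (l.length - 2 - i)) := fun i hi => by
    rw [Nat.odd_iff, Nat.odd_iff]; omega
  unfold IsTPathOn
  rw [List.length_reverse]
  refine ⟨hlen, ?_, ?_, fun i hi => ?_, fun i hi => ?_, fun i j hij hj => ?_,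
    fun i hi c d hcd => ?_, fun i hi hil => ?_, ⟨fun i => 1 - t (l.length - 2 - i),
      fun i hi hil => ?_, fun i j hi hj hij hjl => ?_⟩⟩
  · rwa [List.getD_reverse 0 (by omega), Nat.sub_zero]
  · rwa [List.getD_reverse _ (by omega), Nat.sub_self]
  · rw [List.getD_reverse i (by simpa using hi)]
    exact hmem _ (by omega)
  · obtain ⟨h1, h2⟩ := l.getD_reverse_step 0 hi
    rw [h1, h2]
    exact (hadj _ (by omega)).symm
  · obtain ⟨hi1, hi2⟩ := l.getD_reverse_step 0 (show i + 1 < l.length by omega)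
    obtain ⟨hj1, hj2⟩ := l.getD_reverse_step 0 hj
    rw [hi1, hi2, hj1, hj2, Sym2.eq_swap, ne_comm, Sym2.eq_swap (a := l.getD _ 0)]
    exact hdiff _ _ (by omega) (by omega)
  · obtain ⟨h1, h2⟩ := l.getD_reverse_step 0 hi
    rw [h1, h2, crosses_swap]
    exact hnc _ (by omega) c d hcd
  · obtain ⟨h1, h2⟩ := l.getD_reverse_step 0 hil
    rw [h1, h2, Sym2.eq_swap]
    exact hDmem _ ((hpar i hil).mp hi) (by omega)
  · obtain ⟨h1, h2⟩ := l.getD_reverse_step 0 hil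
    rw [h1, h2]
    exact (hcr _ ((hpar i hil).mp hi) (by omega)).swap_left.swap_right
  · have := hmono _ _ ((hpar j hjl).mp hj) ((hpar i (by omega)).mp hi) (by omega) (by omega)
    linarith

theorem pathWeight_reverse {K : Type*} [CommGroup K] {f : ZMod n → ZMod n → K}
    (hf : ∀ x y, f x y = f y x) (hev : Even l.length) :
    pathWeight n f l.reverse = pathWeight n f l := by
  have hev' := Nat.even_iff.mp hev
  set m := l.length - 1
  have reflect : ∀ (p : ℕ → Prop) [DecidablePred p], (∀ i < m, p i ↔ p (m - 1 - i)) →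
      ∏ i ∈ (range m).filter p, f (l.reverse.getD i 0) (l.reverse.getD (i + 1) 0) =
        ∏ i ∈ (range m).filter p, f (l.getD i 0) (l.getD (i + 1) 0) := by
    intro p _ hp
    rw [← prod_filter_range_reflect p (fun i => f (l.getD i 0) (l.getD (i + 1) 0)),
      filter_congr fun i hi => hp i (mem_range.mp hi)]
    refine prod_congr rfl fun i hi => ?_
    have hi : i < m := mem_range.mp (mem_filter.mp hi).1
    obtain ⟨h1, h2⟩ := l.getD_reverse_step 0 (show i + 1 < l.length by omega)
    rw [h1, h2, hf, show m - 1 - i = l.length - 2 - i by omega]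
  unfold pathWeight
  rw [List.length_reverse]
  congr 1
  · exact reflect _ fun i hi => by rw [Nat.even_iff, Nat.even_iff]; omega
  · exact reflect _ fun i hi => by rw [Nat.odd_iff, Nat.odd_iff]; omega

theorem mem_tPathFinsetOn [NeZero n] :
    l ∈ TPathFinsetOn n W D a b ↔ l.length < n * n + 2 ∧ IsTPathOn n W D a b l := by
  classical
  simp only [TPathFinsetOn, mem_filter, mem_biUnion, mem_range, mem_image, mem_univ, true_and]
  constructor
  · rintro ⟨⟨k, hk, g, rfl⟩, hl⟩
    exact ⟨by rwa [List.length_ofFn], hl⟩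
  · rintro ⟨hlen, hl⟩
    exact ⟨⟨l.length, hlen, l.get, List.ofFn_get l⟩, hl⟩

theorem reverse_mem_tPathFinsetOn [NeZero n] (hab : a ≠ b) (hl : l ∈ TPathFinsetOn n W D a b) :
    l.reverse ∈ TPathFinsetOn n W D b a := by
  rw [mem_tPathFinsetOn] at hl ⊢
  exact ⟨by rw [List.length_reverse]; exact hl.1, hl.2.reverse hab⟩

end TPath

theorem tPath_sum_reverse_general
    (n : ℕ) [NeZero n] {K : Type*} [PaperSemifield K]
    (D : Set (Sym2 (ZMod n)))
    (a b : ZMod n) (hab : a ≠ b)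
    (f : ZMod n → ZMod n → K) (hf : SymmOn n Set.univ f) :
    ∑ l ∈ TPathFinset n D a b, WithZero.coe (pathWeight n f l) =
      ∑ l ∈ TPathFinset n D b a, WithZero.coe (pathWeight n f l) := by
  refine sum_nbij' List.reverse List.reverse (fun l hl => reverse_mem_tPathFinsetOn hab hl)
    (fun l hl => reverse_mem_tPathFinsetOn hab.symm hl) (fun l _ => l.reverse_reverse)
    (fun l _ => l.reverse_reverse) fun l hl => ?_
  have hl' := (mem_tPathFinsetOn.mp hl).2
  rw [pathWeight_reverse (fun x y => hf x y trivial trivial) (hl'.even_length hab)]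

/-- For any map `f : diag(P) → K`, the sum of the weights of the T-paths from `α` to
`β` equals the sum of the weights of the T-paths from `β` to `α`. -/
theorem tPath_sum_reverse
    (n : ℕ) [NeZero n] (hn : 3 ≤ n) {K : Type*} [PaperSemifield K]
    (D : Set (Sym2 (ZMod n))) (hD : IsDissection n D)
    (a b : ZMod n) (hab : a ≠ b)
    (f : ZMod n → ZMod n → K) (hf : SymmOn n Set.univ f) :
    ∑ l ∈ TPathFinset n D a b, WithZero.coe (pathWeight n f l) =
      ∑ l ∈ TPathFinset n D b a, WithZero.coe (pathWeight n f l) :=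
  tPath_sum_reverse_general n D a b hab f hf
end

section
/- In the ear setup, let α ∈ U₁ and β ∈ U₂, and let π = (π₁,…,π_p) be a T-path from α to β with respect to D such that π₂ = ζ and π₃ ≠ η. Then every vertex π_i with i ≥ 2 satisfies η < π_i ≤ ζ in the cyclic order. -/
/-! ### Auxiliary lemmas for the proof -/

lemma ear_val_sub_eq (n : ℕ) [NeZero n] (u v : ZMod n) :
    (u - v).val = (u.val + (n - v.val)) % n := by
  have hn : 0 < n := Nat.pos_of_ne_zero (NeZero.ne n)
  have hu := ZMod.val_lt u
  rcases eq_or_ne v 0 with rfl | hv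
  · rw [sub_zero, ZMod.val_zero, Nat.sub_zero, Nat.add_mod_right, Nat.mod_eq_of_lt hu]
  · rw [sub_eq_add_neg, ZMod.val_add, ZMod.neg_val, if_neg hv]

lemma ear_relPos_lt (n : ℕ) [NeZero n] (a x : ZMod n) : relPos n a x < n := ZMod.val_lt _

lemma ear_relPos_eq_zero (n : ℕ) [NeZero n] (a x : ZMod n) : relPos n a x = 0 ↔ x = a := by
  rw [relPos, ZMod.val_eq_zero, sub_eq_zero]

lemma ear_relPos_inj (n : ℕ) [NeZero n] {a x y : ZMod n}
    (h : relPos n a x = relPos n a y) : x = y := by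
  have h2 : x - a = y - a := ZMod.val_injective n h
  exact sub_left_inj.mp h2

lemma ear_relPos_add (n : ℕ) [NeZero n] {a b : ZMod n} (h : a ≠ b) :
    relPos n a b + relPos n b a = n := by
  have h1 : b - a ≠ 0 := sub_ne_zero.mpr (Ne.symm h)
  have h2 : a - b = -(b - a) := by ring
  rw [relPos, relPos, h2, ZMod.neg_val, if_neg h1]
  have := ZMod.val_lt (b - a)
  omega

lemma ear_relPos_shift (n : ℕ) [NeZero n] (A B X : ZMod n) :
    relPos n A X = (relPos n B X + (n - relPos n B A)) % n := by
  have h : X - A = (X - B) - (A - B) := by ring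
  rw [relPos, h, ear_val_sub_eq]
  rfl

lemma ear_relPos_val (n : ℕ) [NeZero n] (A X : ZMod n) :
    relPos n A X = if A.val ≤ X.val then X.val - A.val else X.val + n - A.val := by
  have hx := ZMod.val_lt X; have ha := ZMod.val_lt A
  rw [relPos, ear_val_sub_eq]
  split_ifs with h
  · rw [show X.val + (n - A.val) = (X.val - A.val) + n by omega, Nat.add_mod_right]
    exact Nat.mod_eq_of_lt (by omega)
  · rw [show X.val + (n - A.val) = X.val + n - A.val by omega]
    exact Nat.mod_eq_of_lt (by omega)

/-- The cross product `(Q - P) × (R - P)`, measuring on which side of the oriented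
line `P → Q` the point `R` lies. -/
def earCross (P Q R : ℝ × ℝ) : ℝ :=
  (Q.1 - P.1) * (R.2 - P.2) - (Q.2 - P.2) * (R.1 - P.1)

lemma earCross_left (P Q : ℝ × ℝ) : earCross P Q P = 0 := by simp only [earCross]; ring

lemma earCross_right (P Q : ℝ × ℝ) : earCross P Q Q = 0 := by simp only [earCross]; ring

lemma earCross_segPt (P Q R S : ℝ × ℝ) (t : ℝ) :
    earCross P Q (segPt R S t) = (1 - t) * earCross P Q R + t * earCross P Q S := by
  simp only [earCross, segPt]
  ring

lemma ear_sin_sum_ident (u v : ℝ) :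
    Real.sin (2*u + 2*v) - Real.sin (2*u) - Real.sin (2*v)
      = -4 * Real.sin u * (Real.sin v * Real.sin (u + v)) := by
  rw [show 2*u + 2*v = 2*(u+v) by ring, Real.sin_two_mul, Real.sin_two_mul,
      Real.sin_two_mul, Real.sin_add, Real.cos_add]
  linear_combination (2 * Real.sin u * Real.cos u) * (Real.sin_sq_add_cos_sq v)
    + (2 * Real.sin v * Real.cos v) * (Real.sin_sq_add_cos_sq u)

lemma earCross_circle (p q r : ℝ) :
    earCross (Real.cos p, Real.sin p) (Real.cos q, Real.sin q) (Real.cos r, Real.sin r)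
      = -4 * Real.sin ((r - p)/2) * (Real.sin ((q - r)/2) * Real.sin ((q - p)/2)) := by
  have h1 : earCross (Real.cos p, Real.sin p) (Real.cos q, Real.sin q)
      (Real.cos r, Real.sin r)
      = Real.sin (2*((r-p)/2) + 2*((q-r)/2)) - Real.sin (2*((r-p)/2))
        - Real.sin (2*((q-r)/2)) := by
    rw [show (2*((r-p)/2) + 2*((q-r)/2)) = q - p by ring,
        show (2*((r-p)/2)) = r - p by ring, show (2*((q-r)/2)) = q - r by ring,
        Real.sin_sub, Real.sin_sub, Real.sin_sub]
    simp only [earCross]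
    ring
  rw [h1, ear_sin_sum_ident, show (r-p)/2 + (q-r)/2 = (q-p)/2 by ring]

lemma ear_sin_diff_pos (n : ℕ) (hn : 0 < n) (c d : ℕ) (hd : d < n) (hcd : c < d) :
    0 < Real.sin (Real.pi * ((d:ℝ) - c) / n) := by
  have hπ := Real.pi_pos
  have h1 : (0:ℝ) < (d:ℝ) - c := by
    have : (c:ℝ) < d := by exact_mod_cast hcd
    linarith
  have h2 : ((d:ℝ) - c) < n := by
    have hd' : (d:ℝ) < n := by exact_mod_cast hd
    have hc' : (0:ℝ) ≤ (c:ℝ) := Nat.cast_nonneg c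
    linarith
  have hn' : (0:ℝ) < n := by exact_mod_cast hn
  apply Real.sin_pos_of_pos_of_lt_pi
  · positivity
  · rw [div_lt_iff₀ hn']
    nlinarith

lemma ear_sin_diff_neg (n : ℕ) (hn : 0 < n) (c d : ℕ) (hc : c < n) (hdc : d < c) :
    Real.sin (Real.pi * ((d:ℝ) - c) / n) < 0 := by
  have h : Real.pi * ((d:ℝ) - c) / n = -(Real.pi * ((c:ℝ) - d) / n) := by ring
  rw [h, Real.sin_neg]
  have := ear_sin_diff_pos n hn d c hc hdc
  linarith

/-- Separation lemma: a vertex strictly inside the arc from `A` to `B` lies strictly on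
one side of the chord `A B` in the regular realisation, and a vertex strictly inside
the arc from `B` to `A` lies strictly on the other side. -/
lemma ear_sep (n : ℕ) (hn : 3 ≤ n) [NeZero n] (A B X : ZMod n) (hAB : A ≠ B) :
    (0 < relPos n A X → relPos n A X < relPos n A B →
      earCross (vtx n A) (vtx n B) (vtx n X) < 0) ∧
    (relPos n A B < relPos n A X →
      0 < earCross (vtx n A) (vtx n B) (vtx n X)) := by
  have hn0 : 0 < n := by omega
  have haN := ZMod.val_lt A; have hbN := ZMod.val_lt B; have hxN := ZMod.val_lt X
  have hab' : A.val ≠ B.val := fun e => hAB (ZMod.val_injective n e)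
  have hC : earCross (vtx n A) (vtx n B) (vtx n X)
      = -4 * Real.sin (Real.pi * ((X.val:ℝ) - A.val)/n) *
        (Real.sin (Real.pi * ((B.val:ℝ) - X.val)/n) *
         Real.sin (Real.pi * ((B.val:ℝ) - A.val)/n)) := by
    have h := earCross_circle (2*Real.pi*(A.val:ℝ)/n) (2*Real.pi*(B.val:ℝ)/n)
      (2*Real.pi*(X.val:ℝ)/n)
    rw [show (2*Real.pi*(X.val:ℝ)/n - 2*Real.pi*(A.val:ℝ)/n)/2
          = Real.pi*((X.val:ℝ)-A.val)/n by ring,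
        show (2*Real.pi*(B.val:ℝ)/n - 2*Real.pi*(X.val:ℝ)/n)/2
          = Real.pi*((B.val:ℝ)-X.val)/n by ring,
        show (2*Real.pi*(B.val:ℝ)/n - 2*Real.pi*(A.val:ℝ)/n)/2
          = Real.pi*((B.val:ℝ)-A.val)/n by ring] at h
    exact h
  have hrX := ear_relPos_val n A X
  have hrB := ear_relPos_val n A B
  constructor
  · intro h1 h2
    rw [hrX] at h1
    rw [hrX, hrB] at h2
    rw [hC]
    split_ifs at h1 h2 with hax hab hab
    · have s1 := ear_sin_diff_pos n hn0 A.val X.val hxN (by omega)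
      have s2 := ear_sin_diff_pos n hn0 X.val B.val hbN (by omega)
      have s3 := ear_sin_diff_pos n hn0 A.val B.val hbN (by omega)
      nlinarith [mul_pos s1 (mul_pos s2 s3)]
    · have s1 := ear_sin_diff_pos n hn0 A.val X.val hxN (by omega)
      have s2 := ear_sin_diff_neg n hn0 X.val B.val hxN (by omega)
      have s3 := ear_sin_diff_neg n hn0 A.val B.val haN (by omega)
      nlinarith [mul_pos s1 (mul_pos_of_neg_of_neg s2 s3)]
    · omega
    · have s1 := ear_sin_diff_neg n hn0 A.val X.val haN (by omega)
      have s2 := ear_sin_diff_pos n hn0 X.val B.val hbN (by omega)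
      have s3 := ear_sin_diff_neg n hn0 A.val B.val haN (by omega)
      nlinarith [mul_pos_of_neg_of_neg s1 (mul_neg_of_pos_of_neg s2 s3)]
  · intro h
    rw [hrX, hrB] at h
    rw [hC]
    split_ifs at h with hab hax hax
    · have s1 := ear_sin_diff_pos n hn0 A.val X.val hxN (by omega)
      have s2 := ear_sin_diff_neg n hn0 X.val B.val hxN (by omega)
      have s3 := ear_sin_diff_pos n hn0 A.val B.val hbN (by omega)
      nlinarith [mul_neg_of_pos_of_neg s1 (mul_neg_of_neg_of_pos s2 s3)]
    · have s1 := ear_sin_diff_neg n hn0 A.val X.val haN (by omega)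
      have s2 := ear_sin_diff_pos n hn0 X.val B.val hbN (by omega)
      have s3 := ear_sin_diff_pos n hn0 A.val B.val hbN (by omega)
      nlinarith [mul_neg_of_neg_of_pos s1 (mul_pos s2 s3)]
    · omega
    · have s1 := ear_sin_diff_neg n hn0 A.val X.val haN (by omega)
      have s2 := ear_sin_diff_neg n hn0 X.val B.val hxN (by omega)
      have s3 := ear_sin_diff_neg n hn0 A.val B.val haN (by omega)
      nlinarith [mul_neg_of_neg_of_pos s1 (mul_pos_of_neg_of_neg s2 s3)]


set_option maxHeartbeats 1600000 in
/-- **Ear setup.**  `D = {d} ⊔ D₂` is a dissection of the `n`-gon, where `d = {ζ,η}`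
divides the polygon into subpolygons `P₁` (vertex set `V₁`, an ear, with interior
`U₁ = {ε : ζ < ε < η}`) and `P₂` (vertex set `V₂`, with interior `U₂ = {ε : η < ε < ζ}`),
and `D₂` is a dissection of `P₂`.  Let `α ∈ U₁`, `β ∈ U₂` and let
`π = (π₁, …, π_p)` be a T-path from `α` to `β` with respect to `D` with `π₂ = ζ` and
`π₃ ≠ η`.  Then `η < π_i ≤ ζ` for all `i ≥ 2`. -/
theorem ear_tPath_vertices_between
    (n : ℕ) (hn : 3 ≤ n) (ζ η : ZMod n) (hζη : IsInternalDiag n ζ η)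
    (D D₂ : Set (Sym2 (ZMod n)))
    (hD : IsDissection n D)
    (hsplit : D = insert s(ζ, η) D₂) (hdm : s(ζ, η) ∉ D₂)
    (hD₂ : IsDissectionOf n {ε : ZMod n | relPos n η ε ≤ relPos n η ζ} D₂)
    (α β : ZMod n)
    (hα : 0 < relPos n ζ α ∧ relPos n ζ α < relPos n ζ η)
    (hβ : 0 < relPos n η β ∧ relPos n η β < relPos n η ζ)
    (l : List (ZMod n)) (hl : IsTPath n D α β l)
    (h2 : l.getD 1 0 = ζ) (h3 : l.getD 2 0 ≠ η) :
    ∀ i, 1 ≤ i → i < l.length →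
      0 < relPos n η (l.getD i 0) ∧ relPos n η (l.getD i 0) ≤ relPos n η ζ := by
  haveI : NeZero n := ⟨by omega⟩
  obtain ⟨hζηne, -⟩ := hζη
  obtain ⟨hα1, hα2⟩ := hα
  obtain ⟨hb0, hbm⟩ := hβ
  obtain ⟨hlen, hstart, hend, hmem, hne, hdiff, hnocross, heven, t, ht, htmono⟩ := hl
  have hmn : relPos n η ζ < n := ear_relPos_lt n η ζ
  have hm0 : 0 < relPos n η ζ := by
    rcases Nat.eq_zero_or_pos (relPos n η ζ) with h | h
    · exact absurd ((ear_relPos_eq_zero n η ζ).mp h) hζηne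
    · exact h
  have hη0 : relPos n η η = 0 := (ear_relPos_eq_zero n η η).mpr rfl
  have hηζ' : η ≠ ζ := fun e => hζηne e.symm
  have hζηn : relPos n ζ η = n - relPos n η ζ := by
    have h := ear_relPos_add n hηζ'
    omega
  have hrα : relPos n η ζ < relPos n η α ∧ relPos n η α < n := by
    have hs := ear_relPos_shift n η ζ α
    rw [hζηn] at hs
    rw [show relPos n ζ α + (n - (n - relPos n η ζ))
          = relPos n ζ α + relPos n η ζ by omega] at hs
    rw [Nat.mod_eq_of_lt (by omega)] at hs
    omega
  have hDend : ∀ c d : ZMod n, s(c, d) ∈ D →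
      relPos n η c ≤ relPos n η ζ ∧ relPos n η d ≤ relPos n η ζ := by
    intro c d hcd
    rw [hsplit] at hcd
    rcases Set.mem_insert_iff.mp hcd with hcd | hcd
    · rcases Sym2.eq_iff.mp hcd with ⟨rfl, rfl⟩ | ⟨rfl, rfl⟩
      · exact ⟨le_refl _, by omega⟩
      · exact ⟨by omega, le_refl _⟩
    · have h := hD₂.1 c d hcd
      exact ⟨h.1, h.2.1⟩
  intro i hi1 hilt
  by_cases hi1' : i = 1
  · rw [hi1', h2]
    exact ⟨hm0, le_refl _⟩
  by_cases hiend : i = l.length - 1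
  · rw [hiend, hend]
    exact ⟨hb0, le_of_lt hbm⟩
  have hi2 : 2 ≤ i := by omega
  have hile : i ≤ l.length - 2 := by omega
  have hlen4 : 4 ≤ l.length := by omega
  -- facts about γ = π₃
  set γ := l.getD 2 0 with hγdef
  have hζγ : ζ ≠ γ := by
    have h := hne 1 (by omega)
    rwa [h2] at h
  have hstep1 : s(ζ, γ) ∈ D := by
    have h := heven 1 ⟨0, by norm_num⟩ (by omega)
    rwa [h2] at h
  have hstep1D₂ : s(ζ, γ) ∈ D₂ := by
    have h := hstep1
    rw [hsplit] at h
    rcases Set.mem_insert_iff.mp h with h | h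
    · rcases Sym2.eq_iff.mp h with ⟨-, h'⟩ | ⟨h', -⟩
      · exact absurd h' h3
      · exact absurd h' hζηne
    · exact h
  have hγm : relPos n η γ < relPos n η ζ := by
    have h := (hDend _ _ hstep1).2
    rcases eq_or_lt_of_le h with h' | h'
    · exact absurd (ear_relPos_inj n h') (Ne.symm hζγ)
    · exact h'
  have hγ0 : 0 < relPos n η γ := by
    rcases Nat.eq_zero_or_pos (relPos n η γ) with h | h
    · exact absurd ((ear_relPos_eq_zero n η γ).mp h) h3
    · exact h
  -- the second chord geometry
  have hαβ : α ≠ β := by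
    intro e
    rw [e] at hrα
    omega
  have hshift : ∀ X : ZMod n, relPos n η X < relPos n η α →
      relPos n α X = relPos n η X + (n - relPos n η α) := by
    intro X hX
    have hs := ear_relPos_shift n α η X
    have hα' : relPos n η α < n := hrα.2
    rwa [Nat.mod_eq_of_lt (by omega)] at hs
  have hsαβ : relPos n α β = relPos n η β + (n - relPos n η α) := hshift β (by omega)
  have hsαζ : relPos n α ζ = relPos n η ζ + (n - relPos n η α) := hshift ζ (by omega)
  have hsαη : relPos n α η = n - relPos n η α := by
    have h := hshift η (by omega)
    omega
  have hΨζ : 0 < earCross (vtx n α) (vtx n β) (vtx n ζ) :=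
    (ear_sep n hn α β ζ hαβ).2 (by omega)
  have hΨη : earCross (vtx n α) (vtx n β) (vtx n η) < 0 :=
    (ear_sep n hn α β η hαβ).1 (by omega) (by omega)
  -- step 1 crosses α β
  have hcr1 := ht 1 ⟨0, by norm_num⟩ (by omega)
  rw [h2] at hcr1
  obtain ⟨ht10, ht11, s, hs0, hs1, hpteq⟩ := hcr1
  have hΨeq1 : (1 - t 1) * earCross (vtx n α) (vtx n β) (vtx n α)
      + t 1 * earCross (vtx n α) (vtx n β) (vtx n β)
      = (1 - s) * earCross (vtx n α) (vtx n β) (vtx n ζ)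
        + s * earCross (vtx n α) (vtx n β) (vtx n γ) := by
    have h := congrArg (earCross (vtx n α) (vtx n β)) hpteq
    rwa [earCross_segPt, earCross_segPt] at h
  rw [earCross_left, earCross_right] at hΨeq1
  have hΨγ : earCross (vtx n α) (vtx n β) (vtx n γ) < 0 := by nlinarith
  have hγb : relPos n η γ < relPos n η β := by
    by_contra hge
    push_neg at hge
    rcases eq_or_lt_of_le hge with heq | hlt
    · have hγβ : γ = β := ear_relPos_inj n heq.symm
      rw [hγβ, earCross_right] at hΨγ
      exact absurd hΨγ (lt_irrefl 0)
    · have h5 := hshift γ (by omega)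
      have h6 := (ear_sep n hn α β γ hαβ).2 (by omega)
      linarith
  -- the even step adjacent to position i
  obtain ⟨j, hjodd, hjlt, hij⟩ : ∃ j, Odd j ∧ j + 1 < l.length ∧ (i = j ∨ i = j + 1) := by
    rcases Nat.even_or_odd i with he | ho
    · obtain ⟨k, hk⟩ := he
      exact ⟨i - 1, ⟨k - 1, by omega⟩, by omega, Or.inr (by omega)⟩
    · exact ⟨i, ho, by omega, Or.inl rfl⟩
  have hstepj := heven j hjodd hjlt
  have him : relPos n η (l.getD i 0) ≤ relPos n η ζ := by
    have h := hDend _ _ hstepj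
    rcases hij with h' | h'
    · rw [h']; exact h.1
    · rw [h']; exact h.2
  refine ⟨?_, him⟩
  by_contra hzero
  push_neg at hzero
  have hηi : l.getD i 0 = η := (ear_relPos_eq_zero n η _).mp (by omega)
  obtain ⟨x, hxs⟩ : ∃ x, s(l.getD j 0, l.getD (j + 1) 0) = s(η, x) := by
    rcases hij with h' | h'
    · exact ⟨l.getD (j + 1) 0, by rw [show l.getD j 0 = η by rw [← h']; exact hηi]⟩
    · refine ⟨l.getD j 0, ?_⟩
      rw [show l.getD (j + 1) 0 = η by rw [← h']; exact hηi]
      exact Sym2.eq_swap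
  have hxD : s(η, x) ∈ D := hxs ▸ hstepj
  have hcrj := ht j hjodd hjlt
  obtain ⟨-, -, s', hs'0, hs'1, hpt'⟩ := hcrj
  by_cases hxζ : x = ζ
  · -- the even step at j is the diagonal {ζ, η}
    have hj1 : j ≠ 1 := by
      intro hj1
      rcases hij with h' | h'
      · omega
      · refine h3 ?_
        rw [hγdef, show (2:ℕ) = i by omega]
        exact hηi
    have hj3 : 3 ≤ j := by
      obtain ⟨k, hk⟩ := hjodd
      omega
    have htlt : t 1 < t j := htmono 1 j ⟨0, by norm_num⟩ hjodd (by omega) hjlt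
    rw [hxζ] at hxs
    have hΦends : earCross (vtx n η) (vtx n ζ) (vtx n (l.getD j 0)) = 0 ∧
        earCross (vtx n η) (vtx n ζ) (vtx n (l.getD (j + 1) 0)) = 0 := by
      rcases Sym2.eq_iff.mp hxs with ⟨h1', h2'⟩ | ⟨h1', h2'⟩
      · rw [h1', h2']; exact ⟨earCross_left _ _, earCross_right _ _⟩
      · rw [h1', h2']; exact ⟨earCross_right _ _, earCross_left _ _⟩
    have hΦeqj : (1 - t j) * earCross (vtx n η) (vtx n ζ) (vtx n α)
        + t j * earCross (vtx n η) (vtx n ζ) (vtx n β) = 0 := by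
      have h := congrArg (earCross (vtx n η) (vtx n ζ)) hpt'
      rw [earCross_segPt, earCross_segPt, hΦends.1, hΦends.2] at h
      linarith
    have hΦeq1 : (1 - t 1) * earCross (vtx n η) (vtx n ζ) (vtx n α)
        + t 1 * earCross (vtx n η) (vtx n ζ) (vtx n β)
        = s * earCross (vtx n η) (vtx n ζ) (vtx n γ) := by
      have h := congrArg (earCross (vtx n η) (vtx n ζ)) hpteq
      rw [earCross_segPt, earCross_segPt, earCross_right] at h
      linarith
    have hΦα : 0 < earCross (vtx n η) (vtx n ζ) (vtx n α) :=
      (ear_sep n hn η ζ α hηζ').2 (by omega)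
    have hΦβ : earCross (vtx n η) (vtx n ζ) (vtx n β) < 0 :=
      (ear_sep n hn η ζ β hηζ').1 (by omega) (by omega)
    have hΦγ : earCross (vtx n η) (vtx n ζ) (vtx n γ) < 0 :=
      (ear_sep n hn η ζ γ hηζ').1 (by omega) (by omega)
    have hsγ : s * earCross (vtx n η) (vtx n ζ) (vtx n γ) < 0 :=
      mul_neg_of_pos_of_neg hs0 hΦγ
    have hp : 0 < (t j - t 1) * (earCross (vtx n η) (vtx n ζ) (vtx n α)
        - earCross (vtx n η) (vtx n ζ) (vtx n β)) :=
      mul_pos (by linarith) (by linarith)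
    have hkey : (1 - t 1) * earCross (vtx n η) (vtx n ζ) (vtx n α)
        + t 1 * earCross (vtx n η) (vtx n ζ) (vtx n β)
        = ((1 - t j) * earCross (vtx n η) (vtx n ζ) (vtx n α)
            + t j * earCross (vtx n η) (vtx n ζ) (vtx n β))
          + (t j - t 1) * (earCross (vtx n η) (vtx n ζ) (vtx n α)
            - earCross (vtx n η) (vtx n ζ) (vtx n β)) := by ring
    linarith
  · -- the even step at j lies in D₂ and crosses {ζ, π₃}
    have hxD₂ : s(η, x) ∈ D₂ := by
      have h := hxD
      rw [hsplit] at h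
      rcases Set.mem_insert_iff.mp h with h | h
      · rcases Sym2.eq_iff.mp h with ⟨h', -⟩ | ⟨-, h'⟩
        · exact absurd h' hηζ'
        · exact absurd h' hxζ
      · exact h
    have hηx : η ≠ x := (hD₂.1 η x hxD₂).2.2.1
    have hxm : relPos n η x < relPos n η ζ := by
      have h := (hDend _ _ hxD).2
      rcases eq_or_lt_of_le h with h' | h'
      · exact absurd (ear_relPos_inj n h') hxζ
      · exact h'
    have hx0 : 0 < relPos n η x := by
      rcases Nat.eq_zero_or_pos (relPos n η x) with h | h
      · exact absurd ((ear_relPos_eq_zero n η x).mp h) (Ne.symm hηx)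
      · exact h
    have hΨx : 0 < earCross (vtx n α) (vtx n β) (vtx n x) := by
      have h := congrArg (earCross (vtx n α) (vtx n β)) hpt'
      rw [earCross_segPt, earCross_segPt, earCross_left, earCross_right] at h
      rcases Sym2.eq_iff.mp hxs with ⟨h1', h2'⟩ | ⟨h1', h2'⟩
      · rw [h1', h2'] at h
        nlinarith
      · rw [h1', h2'] at h
        nlinarith
    have hbx : relPos n η β < relPos n η x := by
      by_contra hge
      push_neg at hge
      rcases eq_or_lt_of_le hge with heq | hlt
      · have hxβ : x = β := ear_relPos_inj n heq
        rw [hxβ, earCross_right] at hΨx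
        exact absurd hΨx (lt_irrefl 0)
      · have h5 := hshift x (by omega)
        have h6 := (ear_sep n hn α β x hαβ).1 (by omega) (by omega)
        linarith
    have hcross : Crosses n η x ζ γ := by
      refine Or.inr ⟨hγ0, by omega, by omega⟩
    exact hD.2 η x ζ γ hxD hstep1 hcross
end

section
/- In the ear setup, let α ∈ U₁ and β ∈ U₂, and let π = (π₁,…,π_p) be a T-path from α to β with respect to D. Then π₂ ∈ {ζ,η}. -/
lemma crAux_val_sub_of_lt {n : ℕ} [NeZero n] {u v : ZMod n} (h : u.val < v.val) :
    (u - v).val = u.val + n - v.val := by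
  have hv : v ≠ 0 := by
    intro h0; rw [h0, ZMod.val_zero] at h; omega
  have h1 : (u - v) = u + (-v) := by ring
  rw [h1, ZMod.val_add_of_lt, ZMod.neg_val, if_neg hv]
  · have := ZMod.val_lt v; omega
  · rw [ZMod.neg_val, if_neg hv]
    have := ZMod.val_lt v; omega

/-- **Ear setup.**  `D = {d} ⊔ D₂` is a dissection of the `n`-gon, where `d = {ζ,η}`
divides the polygon into subpolygons `P₁` (vertex set `V₁`, an ear, with interior
`U₁ = {ε : ζ < ε < η}`) and `P₂` (vertex set `V₂`, with interior `U₂ = {ε : η < ε < ζ}`),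
and `D₂` is a dissection of `P₂`.  Let `α ∈ U₁`, `β ∈ U₂` and let `π = (π₁, …, π_p)` be
a T-path from `α` to `β` with respect to `D`.  Then `π₂ ∈ {ζ, η}`. -/
theorem ear_tPath_second_vertex
    (n : ℕ) (hn : 3 ≤ n) (ζ η : ZMod n) (hζη : IsInternalDiag n ζ η)
    (D D₂ : Set (Sym2 (ZMod n)))
    (hD : IsDissection n D)
    (hsplit : D = insert s(ζ, η) D₂) (hdm : s(ζ, η) ∉ D₂)
    (hD₂ : IsDissectionOf n {ε : ZMod n | relPos n η ε ≤ relPos n η ζ} D₂)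
    (α β : ZMod n)
    (hα : 0 < relPos n ζ α ∧ relPos n ζ α < relPos n ζ η)
    (hβ : 0 < relPos n η β ∧ relPos n η β < relPos n η ζ)
    (l : List (ZMod n)) (hl : IsTPath n D α β l) :
    l.getD 1 0 = ζ ∨ l.getD 1 0 = η := by
  haveI : NeZero n := ⟨by omega⟩
  by_contra hcon
  push_neg at hcon
  obtain ⟨hpζ, hpη⟩ := hcon
  obtain ⟨hlen, hstart, hend, _, hne, _, hnocross, hstepD, _⟩ := hl
  have hζη' : ζ ≠ η := hζη.1
  set π₂ := l.getD 1 0 with hπ₂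
  have hA1 : 0 < (α - ζ).val := hα.1
  have hA2 : (α - ζ).val < (η - ζ).val := hα.2
  have hHlt : (η - ζ).val < n := ZMod.val_lt _
  have hXlt : (π₂ - ζ).val < n := ZMod.val_lt _
  have hXpos : 0 < (π₂ - ζ).val := by
    rcases Nat.eq_zero_or_pos (π₂ - ζ).val with h0 | h
    · exact absurd (sub_eq_zero.mp (by rwa [ZMod.val_eq_zero] at h0)) hpζ
    · exact h
  have hXne : (π₂ - ζ).val ≠ (η - ζ).val := by
    intro hEq
    exact hpη (sub_left_injective (ZMod.val_injective n hEq))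
  have hmemd : s(ζ, η) ∈ D := hsplit ▸ Set.mem_insert _ _
  have hNC : ¬ Crosses n α π₂ ζ η := by
    have h := hnocross 0 (by omega) ζ η hmemd
    rwa [hstart] at h
  have hζηv : (ζ - η).val = n - (η - ζ).val := by
    have e : ζ - η = -(η - ζ) := by ring
    rw [e, ZMod.neg_val, if_neg]
    intro h0; rw [h0, ZMod.val_zero] at hA2; omega
  have hXH : (π₂ - ζ).val < (η - ζ).val := by
    by_contra hge
    push_neg at hge
    have hHX : (η - ζ).val < (π₂ - ζ).val := lt_of_le_of_ne hge (Ne.symm hXne)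
    have e1 : (η - α) = (η - ζ) - (α - ζ) := by ring
    have e2 : (π₂ - α) = (π₂ - ζ) - (α - ζ) := by ring
    have e3 : (ζ - α) = -(α - ζ) := by ring
    have v1 : relPos n α η = (η - ζ).val - (α - ζ).val := by
      show (η - α).val = _
      rw [e1, ZMod.val_sub (le_of_lt hA2)]
    have v2 : relPos n α π₂ = (π₂ - ζ).val - (α - ζ).val := by
      show (π₂ - α).val = _
      rw [e2, ZMod.val_sub (by omega)]
    have v3 : relPos n α ζ = n - (α - ζ).val := by
      show (ζ - α).val = _
      rw [e3, ZMod.neg_val, if_neg]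
      intro h0; rw [h0, ZMod.val_zero] at hA1; omega
    exact hNC (Or.inr ⟨by omega, by omega, by omega⟩)
  rcases Nat.lt_or_ge 2 l.length with h3 | h2
  · -- length ≥ 3 : the second step is a diagonal of D, impossible
    have hstep := hstepD 1 odd_one (by omega)
    rw [← hπ₂, hsplit] at hstep
    rcases hstep with heq | hmem
    · rcases Sym2.eq_iff.mp heq with ⟨h1, _⟩ | ⟨h1, _⟩
      · exact hpζ h1
      · exact hpη h1
    · have hmemV : (π₂ - η).val ≤ (ζ - η).val := (hD₂.1 π₂ _ hmem).1
      have e : π₂ - η = (π₂ - ζ) - (η - ζ) := by ring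
      have hv : (π₂ - η).val = (π₂ - ζ).val + n - (η - ζ).val := by
        rw [e, crAux_val_sub_of_lt hXH]
      omega
  · -- length = 2 : then π₂ = β ∈ U₂, contradicting π₂ ∈ U₁
    have hlen2 : l.length - 1 = 1 := by omega
    rw [hlen2, ← hπ₂] at hend
    have hB1 : 0 < (β - η).val := hβ.1
    have hB2 : (β - η).val < (ζ - η).val := hβ.2
    have e : β - ζ = (β - η) + (η - ζ) := by ring
    have hv : (β - ζ).val = (β - η).val + (η - ζ).val := by
      rw [e, ZMod.val_add_of_lt (by omega)]
    rw [hend] at hXH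
    omega
end
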